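/- Let V be a complex Hilbert space with two inner products inducing norms ‖·‖_a and ‖·‖_s, π a projection, B a sesquilinear form, and φ ∈ V a unit vector in the s-norm (‖φ‖_s = 1). Suppose T_φ ∈ V satisfies B(T_φ, T_φ) + s(π T_φ, π T_φ) = s(φ, π T_φ) and |B(v,v) + s(πv, πv)| ≥ α(‖v‖_a² + ‖πv‖_s²) for all v. Then ‖π T_φ‖_s ≤ α⁻¹ and ‖T_φ‖_a ≤ α⁻¹. -/

import Mathlib

lemma le_inv_of_mul_sq_le {α y : ℝ} (hα : 0 < α) (h : α * y ^ 2 ≤ y) : y ≤ α⁻¹ := by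
  by_contra! hy
  have hαy : 1 < α * y := by rwa [inv_lt_iff_one_lt_mul₀' hα] at hy
  nlinarith [inv_pos.2 hα]

lemma le_inv_of_mul_sq_le_inv {α x : ℝ} (hα : 0 < α) (h : α * x ^ 2 ≤ α⁻¹) : x ≤ α⁻¹ := by
  have hsq : x ^ 2 ≤ α⁻¹ ^ 2 := by
    rw [sq α⁻¹, ← div_eq_inv_mul, le_div_iff₀ hα, mul_comm]
    exact h
  exact (le_abs_self x).trans (abs_le_of_sq_le_sq hsq (inv_nonneg.2 hα.le))

lemma le_inv_of_mul_sq_add_sq_le {α x y : ℝ} (hα : 0 < α) (h : α * (x ^ 2 + y ^ 2) ≤ y) :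
    y ≤ α⁻¹ ∧ x ≤ α⁻¹ := by
  have hy : y ≤ α⁻¹ := le_inv_of_mul_sq_le hα (by nlinarith [sq_nonneg x])
  exact ⟨hy, le_inv_of_mul_sq_le_inv hα (by nlinarith [sq_nonneg y])⟩

theorem basis_apriori_bound_general {V : Type*} [AddCommGroup V] [Module ℂ V]
    (B s : V → V → ℂ) (π : V →ₗ[ℂ] V) (na ns : V → ℝ)
    (α : ℝ) (hα : 0 < α)
    (hCS : ∀ w v, ‖s w v‖ ≤ ns w * ns v)
    (hcoerc : ∀ v, α * ((na v) ^ 2 + (ns (π v)) ^ 2)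
      ≤ ‖B v v + s (π v) (π v)‖)
    (φ Tφ : V) (hφ : ns φ = 1)
    (hvar : B Tφ Tφ + s (π Tφ) (π Tφ) = s φ (π Tφ)) :
    ns (π Tφ) ≤ α⁻¹ ∧ na Tφ ≤ α⁻¹ := by
  apply le_inv_of_mul_sq_add_sq_le hα
  calc α * (na Tφ ^ 2 + ns (π Tφ) ^ 2) ≤ ‖B Tφ Tφ + s (π Tφ) (π Tφ)‖ := hcoerc Tφ
    _ = ‖s φ (π Tφ)‖ := by rw [hvar]
    _ ≤ ns φ * ns (π Tφ) := hCS φ (π Tφ)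
    _ = ns (π Tφ) := by rw [hφ, one_mul]

/-- A-priori bound on multiscale basis functions (used in Theorem 6): if
`B(Tφ,Tφ) + s(πTφ, πTφ) = s(φ, πTφ)`, coercivity
`|B(v,v) + s(πv,πv)| ≥ α(‖v‖_a² + ‖πv‖_s²)` holds, `‖φ‖_s = 1`, and `s`
satisfies the Cauchy–Schwarz inequality `|s(w,v)| ≤ ‖w‖_s‖v‖_s`, then
`‖πTφ‖_s ≤ α⁻¹` and `‖Tφ‖_a ≤ α⁻¹`. -/
theorem basis_apriori_bound {V : Type*} [AddCommGroup V] [Module ℂ V]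
    (B s : V → V → ℂ) (π : V →ₗ[ℂ] V) (na ns : V → ℝ)
    (α : ℝ) (hα : 0 < α)
    (hna : ∀ v, 0 ≤ na v) (hns : ∀ v, 0 ≤ ns v)
    (hCS : ∀ w v, ‖s w v‖ ≤ ns w * ns v)
    (hcoerc : ∀ v, α * ((na v) ^ 2 + (ns (π v)) ^ 2)
      ≤ ‖B v v + s (π v) (π v)‖)
    (φ Tφ : V) (hφ : ns φ = 1)
    (hvar : B Tφ Tφ + s (π Tφ) (π Tφ) = s φ (π Tφ)) :
    ns (π Tφ) ≤ α⁻¹ ∧ na Tφ ≤ α⁻¹ :=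
  basis_apriori_bound_general B s π na ns α hα hCS hcoerc φ Tφ hφ hvar
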